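/- arXiv:0704.1343 — 5 statements merged into one kernel-verified Lean document; each statement's English description precedes it below -/
import Mathlib

section
/- Let γ>0, m,k≥1, Q=m+(1+γ)k, and ρ(x,y)=(|x|^{2(1+γ)}+(1+γ)²|y|²)^{1/(2(1+γ))}. If f∈C²(0,∞) and u(z)=f(ρ(z)), then the Baouendi-Grushin Laplacian satisfies Δ_γ u(z) = (|x|^{2γ}/ρ(z)^{2γ})·(f''(ρ(z)) + ((Q-1)/ρ(z))·f'(ρ(z))) for all z=(x,y) with ρ(z)≠0 and x≠0. -/
/-!
Write `N = ρ^{2(1+γ)} = ‖x‖^{2(1+γ)} + (1+γ)²‖y‖²`. Then `dN = 2(1+γ) L` for the covector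
`L_w = gaugeForm γ w`, `L_w(v) = ‖x‖^{2γ}⟪x, v₁⟫ + (1+γ)⟪y, v₂⟫`, so `dρ = ρ^{-(1+2γ)} L`, and
the chain rule gives
`D²u(v, v) = ρ^{-2(1+2γ)} (f'' - (1+2γ) f'/ρ) L(v)² + ρ^{-(1+2γ)} f' q(v)`,
where `q = gaugeQuad γ x` is the derivative of `w ↦ L_w(v)` along `v`. The operator `Δ_γ` is
the weighted trace `Σᵢ D²u(eᵢ, eᵢ) + ‖x‖^{2γ} Σⱼ D²u(fⱼ, fⱼ)`. The trace of `L²` is `‖x‖^{2γ} N`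
(this is `|∇_γ ρ|² = ‖x‖^{2γ} / ρ^{2γ}`) and the trace of `q` is `‖x‖^{2γ} (m + (1+γ)k + 2γ)`;
the extra `2γ` cancels against the `1 + 2γ`, which leaves `Q - 1`.
-/

open MeasureTheory Real

/-- The product space `ℝ^m × ℝ^k` for the Baouendi-Grushin setting. -/
abbrev GSp (m k : ℕ) := EuclideanSpace ℝ (Fin m) × EuclideanSpace ℝ (Fin k)

/-- The Baouendi-Grushin gauge `ρ(x,y) = (|x|^{2(1+γ)} + (1+γ)²|y|²)^{1/(2(1+γ))}`. -/
noncomputable def grho (γ : ℝ) {m k : ℕ} (z : GSp m k) : ℝ :=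
  (‖z.1‖ ^ (2 * (1 + γ)) + (1 + γ) ^ 2 * ‖z.2‖ ^ 2) ^ (1 / (2 * (1 + γ)))

/-- Squared norm of the Baouendi-Grushin gradient
`|∇_γ φ|² = |∇_x φ|² + |x|^{2γ} |∇_y φ|²`. -/
noncomputable def ggradSq (γ : ℝ) {m k : ℕ} (φ : GSp m k → ℝ) (z : GSp m k) : ℝ :=
  (∑ i, (fderiv ℝ φ z (EuclideanSpace.single i (1:ℝ), 0)) ^ 2)
  + ‖z.1‖ ^ (2 * γ) * ∑ j, (fderiv ℝ φ z (0, EuclideanSpace.single j (1:ℝ))) ^ 2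

/-- The Baouendi-Grushin operator `Δ_γ φ = Δ_x φ + |x|^{2γ} Δ_y φ`. -/
noncomputable def glap (γ : ℝ) {m k : ℕ} (φ : GSp m k → ℝ) (z : GSp m k) : ℝ :=
  (∑ i, fderiv ℝ (fun w => fderiv ℝ φ w (EuclideanSpace.single i (1:ℝ), 0)) z
      (EuclideanSpace.single i (1:ℝ), 0))
  + ‖z.1‖ ^ (2 * γ) * ∑ j, fderiv ℝ (fun w => fderiv ℝ φ w (0, EuclideanSpace.single j (1:ℝ))) z
      (0, EuclideanSpace.single j (1:ℝ))

open Filter Topology RealInnerProductSpace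

section SecondDerivative

variable {E : Type*} [NormedAddCommGroup E] [NormedSpace ℝ E]

theorem fderiv_fderiv_comp_apply_self {g : ℝ → ℝ} {φ : E → ℝ} {φ' : E → E →L[ℝ] ℝ}
    {D : E →L[ℝ] ℝ} {z v : E} (hφ : ∀ᶠ w in 𝓝 z, HasFDerivAt φ (φ' w) w)
    (hφ' : HasFDerivAt (fun w => φ' w v) D z) (hg : ∀ᶠ w in 𝓝 z, DifferentiableAt ℝ g (φ w))
    (hg' : DifferentiableAt ℝ (deriv g) (φ z)) :
    fderiv ℝ (fun w => fderiv ℝ (fun w' => g (φ w')) w v) z v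
      = deriv (deriv g) (φ z) * φ' z v ^ 2 + deriv g (φ z) * D v := by
  have hfirst : (fun w => fderiv ℝ (fun w' => g (φ w')) w v)
      =ᶠ[𝓝 z] fun w => deriv g (φ w) * φ' w v := by
    filter_upwards [hφ, hg] with w hφw hgw
    have hcomp : HasFDerivAt (fun w' => g (φ w')) (deriv g (φ w) • φ' w) w :=
      hgw.hasDerivAt.comp_hasFDerivAt w hφw
    rw [hcomp.fderiv]
    rfl
  have hprod : HasFDerivAt (fun w => deriv g (φ w) * φ' w v)
      (deriv g (φ z) • D + φ' z v • deriv (deriv g) (φ z) • φ' z) z :=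
    (hg'.hasDerivAt.comp_hasFDerivAt z hφ.self_of_nhds).mul hφ'
  rw [hfirst.fderiv_eq, hprod.fderiv]
  simp only [add_apply, smul_apply, smul_eq_mul]
  ring

end SecondDerivative

section InnerProductSpace

variable {F : Type*} [NormedAddCommGroup F] [InnerProductSpace ℝ F]

theorem hasFDerivAt_norm_rpow_of_ne_zero {x : F} (hx : x ≠ 0) (p : ℝ) :
    HasFDerivAt (fun x : F => ‖x‖ ^ p) ((p * ‖x‖ ^ (p - 2)) • innerSL ℝ x) x := by
  have hsq := (hasStrictFDerivAt_norm_sq x).hasFDerivAt.rpow_const (p := p / 2) (by simp [hx])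
  simp only [← rpow_natCast_mul (norm_nonneg _), Nat.cast_ofNat,
    mul_div_cancel₀ p two_ne_zero] at hsq
  refine hsq.congr_fderiv ?_
  ext y
  simp only [smul_apply, smul_eq_mul, two_smul, add_apply]
  rw [show 2 * (p / 2 - 1) = p - 2 by ring]
  ring

theorem hasFDerivAt_inner_const (a x : F) : HasFDerivAt (fun x : F => ⟪x, a⟫) (innerSL ℝ a) x := by
  convert (innerSL ℝ a).hasFDerivAt using 1
  ext y
  exact real_inner_comm a y

theorem hasFDerivAt_norm_rpow_mul_inner {x : F} (hx : x ≠ 0) (p : ℝ) (a : F) :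
    HasFDerivAt (fun x : F => ‖x‖ ^ p * ⟪x, a⟫)
      ((p * ‖x‖ ^ (p - 2) * ⟪x, a⟫) • innerSL ℝ x + ‖x‖ ^ p • innerSL ℝ a) x := by
  refine ((hasFDerivAt_norm_rpow_of_ne_zero hx p).mul
    (hasFDerivAt_inner_const a x)).congr_fderiv ?_
  ext y
  simp only [smul_apply, smul_eq_mul, add_apply]
  ring

end InnerProductSpace

section Gauge

variable {γ : ℝ} {m k : ℕ}

noncomputable def gaugeForm (γ : ℝ) (w : GSp m k) : GSp m k →L[ℝ] ℝ :=
  ‖w.1‖ ^ (2 * γ) • (innerSL ℝ w.1).comp (ContinuousLinearMap.fst ℝ _ _)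
    + (1 + γ) • (innerSL ℝ w.2).comp (ContinuousLinearMap.snd ℝ _ _)

@[simp]
theorem gaugeForm_apply (w v : GSp m k) :
    gaugeForm γ w v = ‖w.1‖ ^ (2 * γ) * ⟪w.1, v.1⟫ + (1 + γ) * ⟪w.2, v.2⟫ := by
  simp [gaugeForm]

noncomputable def gaugeQuad (γ : ℝ) (x : EuclideanSpace ℝ (Fin m)) (v : GSp m k) : ℝ :=
  2 * γ * ‖x‖ ^ (2 * γ - 2) * ⟪x, v.1⟫ ^ 2 + ‖x‖ ^ (2 * γ) * ‖v.1‖ ^ 2 + (1 + γ) * ‖v.2‖ ^ 2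

theorem grho_rpow (hγ : 0 < 1 + γ) (w : GSp m k) :
    grho γ w ^ (2 * (1 + γ)) = ‖w.1‖ ^ (2 * (1 + γ)) + (1 + γ) ^ 2 * ‖w.2‖ ^ 2 := by
  rw [grho, ← rpow_mul (by positivity), one_div, inv_mul_cancel₀ (by positivity), rpow_one]

theorem grho_pos (hγ : 0 < 1 + γ) {w : GSp m k} (hx : w.1 ≠ 0) : 0 < grho γ w := by
  have := norm_pos_iff.mpr hx
  unfold grho
  positivity

theorem hasFDerivAt_grho (hγ : 0 < 1 + γ) {z : GSp m k} (hx : z.1 ≠ 0) :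
    HasFDerivAt (grho γ) (grho γ z ^ (-(1 + 2 * γ)) • gaugeForm γ z) z := by
  have hN : HasFDerivAt (fun w : GSp m k => ‖w.1‖ ^ (2 * (1 + γ)) + (1 + γ) ^ 2 * ‖w.2‖ ^ 2)
      ((2 * (1 + γ)) • gaugeForm γ z) z := by
    refine (((hasFDerivAt_norm_rpow_of_ne_zero hx _).comp z hasFDerivAt_fst).add
      (hasFDerivAt_snd.norm_sq.const_mul _)).congr_fderiv (ContinuousLinearMap.ext fun v => ?_)
    simp only [add_apply, smul_apply, ContinuousLinearMap.comp_apply, smul_eq_mul,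
      innerSL_apply_apply, ContinuousLinearMap.coe_fst', ContinuousLinearMap.coe_snd',
      gaugeForm_apply, two_smul]
    rw [show 2 * (1 + γ) - 2 = 2 * γ by ring]
    ring
  have hρ := grho_pos hγ hx
  refine (hN.rpow_const (p := 1 / (2 * (1 + γ)))
    (Or.inl (grho_rpow hγ z ▸ (rpow_pos_of_pos hρ _).ne'))).congr_fderiv ?_
  rw [smul_smul, ← grho_rpow hγ, ← rpow_mul hρ.le]
  congr 1
  field_simp
  ring_nf

theorem hasFDerivAt_gaugeForm_apply {z : GSp m k} (hx : z.1 ≠ 0) (v : GSp m k) :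
    HasFDerivAt (fun w => gaugeForm γ w v)
      (((2 * γ * ‖z.1‖ ^ (2 * γ - 2) * ⟪z.1, v.1⟫) • innerSL ℝ z.1
          + ‖z.1‖ ^ (2 * γ) • innerSL ℝ v.1).comp (ContinuousLinearMap.fst ℝ _ _)
        + (1 + γ) • (innerSL ℝ v.2).comp (ContinuousLinearMap.snd ℝ _ _)) z := by
  simp only [gaugeForm_apply]
  exact ((hasFDerivAt_norm_rpow_mul_inner hx _ v.1).comp z hasFDerivAt_fst).add
    (((hasFDerivAt_inner_const v.2 z.2).comp z hasFDerivAt_snd).const_mul _)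

theorem fderiv_fderiv_comp_grho_apply_self (hγ : 0 < 1 + γ) {f : ℝ → ℝ}
    (hf : ContDiffOn ℝ 2 f (Set.Ioi 0)) {z : GSp m k} (hx : z.1 ≠ 0) (v : GSp m k) :
    fderiv ℝ (fun w => fderiv ℝ (fun w' => f (grho γ w')) w v) z v
      = (grho γ z ^ (-(1 + 2 * γ))) ^ 2 * (deriv (deriv f) (grho γ z)
          - (1 + 2 * γ) / grho γ z * deriv f (grho γ z)) * gaugeForm γ z v ^ 2
        + grho γ z ^ (-(1 + 2 * γ)) * deriv f (grho γ z) * gaugeQuad γ z.1 v := by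
  have hρ := grho_pos hγ hx
  have hnear : ∀ᶠ w in 𝓝 z, w.1 ≠ 0 := continuous_fst.continuousAt.eventually_ne hx
  have hf' : ∀ t > 0, DifferentiableAt ℝ f t := fun t ht =>
    (hf.contDiffAt (Ioi_mem_nhds ht)).differentiableAt two_ne_zero
  have hf'' : DifferentiableAt ℝ (deriv f) (grho γ z) :=
    ((hf.deriv_of_isOpen isOpen_Ioi (by norm_num)).contDiffAt
      (Ioi_mem_nhds hρ)).differentiableAt one_ne_zero
  have hscale : HasFDerivAt (fun w => grho γ w ^ (-(1 + 2 * γ)))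
      ((-(1 + 2 * γ) * grho γ z ^ (-(1 + 2 * γ) - 1)) •
        grho γ z ^ (-(1 + 2 * γ)) • gaugeForm γ z) z :=
    (hasFDerivAt_grho hγ hx).rpow_const (Or.inl hρ.ne')
  rw [fderiv_fderiv_comp_apply_self (φ' := fun w => grho γ w ^ (-(1 + 2 * γ)) • gaugeForm γ w)
    (hnear.mono fun w hw => hasFDerivAt_grho hγ hw)
    (hscale.mul (hasFDerivAt_gaugeForm_apply hx v))
    (hnear.mono fun w hw => hf' _ (grho_pos hγ hw)) hf'']
  simp only [ContinuousLinearMap.coe_coe, add_apply, smul_apply, ContinuousLinearMap.comp_apply,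
    smul_eq_mul, innerSL_apply_apply, ContinuousLinearMap.coe_fst', ContinuousLinearMap.coe_snd',
    gaugeForm_apply, gaugeQuad, real_inner_self_eq_norm_sq, rpow_sub_one hρ.ne']
  field_simp
  ring

end Gauge

section GrushinTrace

variable {γ : ℝ} {m k : ℕ}

noncomputable def grushinTrace (γ : ℝ) (x : EuclideanSpace ℝ (Fin m)) (q : GSp m k → ℝ) : ℝ :=
  ∑ i, q (EuclideanSpace.single i 1, 0) + ‖x‖ ^ (2 * γ) * ∑ j, q (0, EuclideanSpace.single j 1)

theorem glap_eq_grushinTrace (φ : GSp m k → ℝ) (z : GSp m k) :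
    glap γ φ z = grushinTrace γ z.1 fun v => fderiv ℝ (fun w => fderiv ℝ φ w v) z v :=
  rfl

theorem grushinTrace_mul_add_mul (x : EuclideanSpace ℝ (Fin m)) (a b : ℝ) (q r : GSp m k → ℝ) :
    grushinTrace γ x (fun v => a * q v + b * r v)
      = a * grushinTrace γ x q + b * grushinTrace γ x r := by
  simp only [grushinTrace, Finset.sum_add_distrib, ← Finset.mul_sum]
  ring

theorem EuclideanSpace.sum_inner_single_sq {n : ℕ} (x : EuclideanSpace ℝ (Fin n)) :
    ∑ i, ⟪x, EuclideanSpace.single i 1⟫ ^ 2 = ‖x‖ ^ 2 := by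
  simpa only [EuclideanSpace.basisFun_apply] using
    (EuclideanSpace.basisFun (Fin n) ℝ).sum_sq_inner_left x

theorem grushinTrace_gaugeForm_sq (hγ : 0 < 1 + γ) {z : GSp m k} (hx : z.1 ≠ 0) :
    grushinTrace γ z.1 (fun v => gaugeForm γ z v ^ 2)
      = ‖z.1‖ ^ (2 * γ) * grho γ z ^ (2 * (1 + γ)) := by
  have hxpos := norm_pos_iff.mpr hx
  simp only [grushinTrace, gaugeForm_apply, inner_zero_right, mul_zero, add_zero, zero_add,
    mul_pow, ← Finset.mul_sum, EuclideanSpace.sum_inner_single_sq, grho_rpow hγ]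
  rw [show 2 * (1 + γ) = 2 * γ + 2 by ring, rpow_add hxpos, rpow_two]
  ring

theorem grushinTrace_gaugeQuad {x : EuclideanSpace ℝ (Fin m)} (hx : x ≠ 0) :
    grushinTrace γ x (gaugeQuad γ (k := k) x) = ‖x‖ ^ (2 * γ) * (m + (1 + γ) * k + 2 * γ) := by
  have hxpos := norm_pos_iff.mpr hx
  simp only [grushinTrace, gaugeQuad, inner_zero_right, norm_zero, PiLp.norm_single,
    norm_one, Finset.sum_add_distrib, ← Finset.mul_sum, EuclideanSpace.sum_inner_single_sq]
  rw [rpow_sub hxpos]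
  simp only [rpow_two, one_pow, zero_pow two_ne_zero, Finset.sum_const, Finset.card_univ,
    Fintype.card_fin, nsmul_eq_mul, mul_one, mul_zero, add_zero]
  field_simp
  ring

end GrushinTrace

theorem stmt1_general (γ : ℝ) (hγ : 0 < γ) (m k : ℕ)
    (Q : ℝ) (hQ : Q = (m : ℝ) + (1 + γ) * k)
    (f : ℝ → ℝ) (hf : ContDiffOn ℝ 2 f (Set.Ioi (0:ℝ)))
    (z : GSp m k) (hx : z.1 ≠ 0) :
    glap γ (fun w => f (grho γ w)) z
      = (‖z.1‖ ^ (2 * γ) / (grho γ z) ^ (2 * γ)) *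
        (deriv (deriv f) (grho γ z) + (Q - 1) / grho γ z * deriv f (grho γ z)) := by
  have hγ' : 0 < 1 + γ := by linarith
  have hρ := grho_pos hγ' hx
  simp only [glap_eq_grushinTrace, fderiv_fderiv_comp_grho_apply_self hγ' hf hx]
  rw [grushinTrace_mul_add_mul, grushinTrace_gaugeForm_sq hγ' hx, grushinTrace_gaugeQuad hx, hQ,
    show 2 * (1 + γ) = 2 * γ + 2 by ring, rpow_add hρ, rpow_neg hρ.le, rpow_add hρ, rpow_two,
    rpow_one]
  field_simp
  ring

/-- radial formula for the Baouendi-Grushin Laplacian. -/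
theorem stmt1 (γ : ℝ) (hγ : 0 < γ) (m k : ℕ) (hm : 1 ≤ m) (hk : 1 ≤ k)
    (Q : ℝ) (hQ : Q = (m : ℝ) + (1 + γ) * k)
    (f : ℝ → ℝ) (hf : ContDiffOn ℝ 2 f (Set.Ioi (0:ℝ)))
    (z : GSp m k) (hz : grho γ z ≠ 0) (hx : z.1 ≠ 0) :
    glap γ (fun w => f (grho γ w)) z
      = (‖z.1‖ ^ (2 * γ) / (grho γ z) ^ (2 * γ)) *
        (deriv (deriv f) (grho γ z) + (Q - 1) / grho γ z * deriv f (grho γ z)) :=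
  stmt1_general γ hγ m k Q hQ f hf z hx
end

section
/- Let γ>0, m,k≥1, Q=m+(1+γ)k, α∈ℝ, and ρ(x,y)=(|x|^{2(1+γ)}+(1+γ)²|y|²)^{1/(2(1+γ))}. Then for z=(x,y) with ρ(z)≠0 and x≠0, Δ_γ(ρ^{α-2})(z) = (Q+α-4)(α-2)·ρ(z)^{α-4}·|∇_γ ρ(z)|², where |∇_γ ρ| = |x|^γ/ρ^γ. -/
/-!
Put `N = ρ ^ (2 * (1 + γ)) = |x|^{2(1+γ)} + (1+γ)²|y|²` and `β = (α - 2) / (2 * (1 + γ))`, so that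
`ρ^{α-2} = N^β`, and `N` is smooth where `x ≠ 0`. The chain rule gives the second derivatives of
`N^β` along `(u, 0)` and `(0, v)` in any inner product spaces; summing over orthonormal coordinate
directions (Parseval) the `x`-part produces `m` and the `y`-part `k`, and the identity
`N = |x|² |x|^{2γ} + (1+γ)²|y|²` collapses what is left to `(α-2)(Q+α-4) N^{β-1} |x|^{2γ}`,
which is the right-hand side since `|∇_γ ρ|² = |x|^{2γ} / ρ^{2γ}`.
-/

open MeasureTheory Real

open scoped RealInnerProductSpace
open ContinuousLinearMap (fst snd)

lemma norm_rpow_two_mul {E : Type*} [NormedAddCommGroup E] (x : E) (c : ℝ) :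
    ‖x‖ ^ (2 * c) = (‖x‖ ^ 2) ^ c := by
  exact_mod_cast Real.rpow_natCast_mul (norm_nonneg x) 2 c

section Gauge

variable {E F : Type*} [NormedAddCommGroup E] [NormedAddCommGroup F] {γ β : ℝ}

/-- `ρ ^ (2 * (1 + γ))`, written through `‖x‖ ^ 2` so that it is smooth away from `x = 0`. -/
noncomputable def grhoPow (γ : ℝ) (w : E × F) : ℝ :=
  (‖w.1‖ ^ 2) ^ (1 + γ) + (1 + γ) ^ 2 * ‖w.2‖ ^ 2

lemma grhoPow_nonneg (w : E × F) : 0 ≤ grhoPow γ w := by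
  unfold grhoPow
  positivity

lemma grhoPow_pos {w : E × F} (hx : w.1 ≠ 0) : 0 < grhoPow γ w := by
  unfold grhoPow
  have hS := Real.rpow_pos_of_pos (pow_pos (norm_pos_iff.2 hx) 2) (1 + γ)
  positivity

variable [InnerProductSpace ℝ E] [InnerProductSpace ℝ F]

lemma hasFDerivAt_grhoPow {w : E × F} (hx : w.1 ≠ 0) :
    HasFDerivAt (grhoPow γ)
      ((2 * (1 + γ) * (‖w.1‖ ^ 2) ^ γ) • (innerSL ℝ w.1).comp (fst ℝ E F)
        + (2 * (1 + γ) ^ 2) • (innerSL ℝ w.2).comp (snd ℝ E F)) w := by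
  have hS := (hasDerivAt_rpow_const (p := 1 + γ) (Or.inl (pow_ne_zero 2 (norm_ne_zero_iff.2 hx))))
    |>.comp_hasFDerivAt w (hasFDerivAt_fst (p := w)).norm_sq
  have hT := ((hasFDerivAt_snd (p := w)).norm_sq).const_mul ((1 + γ) ^ 2)
  refine (hS.add hT).congr_fderiv (ContinuousLinearMap.ext fun v => ?_)
  simp only [add_sub_cancel_left, add_apply, smul_apply, ContinuousLinearMap.comp_apply,
    ContinuousLinearMap.coe_fst', coe_innerSL_apply, nsmul_eq_mul, Nat.cast_ofNat, smul_eq_mul,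
    ContinuousLinearMap.coe_snd']
  ring

lemma hasFDerivAt_grhoPow_rpow {w : E × F} (hx : w.1 ≠ 0) :
    HasFDerivAt (fun w => grhoPow γ w ^ β)
      ((β * grhoPow γ w ^ (β - 1)) • ((2 * (1 + γ) * (‖w.1‖ ^ 2) ^ γ) • (innerSL ℝ w.1).comp (fst ℝ E F)
        + (2 * (1 + γ) ^ 2) • (innerSL ℝ w.2).comp (snd ℝ E F))) w :=
  (hasDerivAt_rpow_const (Or.inl (grhoPow_pos hx).ne')).comp_hasFDerivAt w (hasFDerivAt_grhoPow hx)

lemma fderiv_grhoPow_rpow_apply_fst {w : E × F} (hx : w.1 ≠ 0) (u : E) :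
    fderiv ℝ (fun w => grhoPow γ w ^ β) w (u, 0)
      = 2 * β * (1 + γ) * (grhoPow γ w ^ (β - 1) * (‖w.1‖ ^ 2) ^ γ * ⟪w.1, u⟫) := by
  rw [(hasFDerivAt_grhoPow_rpow hx).fderiv]
  simp only [smul_add, add_apply, smul_apply, ContinuousLinearMap.comp_apply, ContinuousLinearMap.coe_fst',
    coe_innerSL_apply, smul_eq_mul, ContinuousLinearMap.coe_snd', inner_zero_right, mul_zero, add_zero]
  ring

lemma fderiv_grhoPow_rpow_apply_snd {w : E × F} (hx : w.1 ≠ 0) (v : F) :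
    fderiv ℝ (fun w => grhoPow γ w ^ β) w (0, v)
      = 2 * β * (1 + γ) ^ 2 * (grhoPow γ w ^ (β - 1) * ⟪w.2, v⟫) := by
  rw [(hasFDerivAt_grhoPow_rpow hx).fderiv]
  simp only [smul_add, add_apply, smul_apply, ContinuousLinearMap.comp_apply, ContinuousLinearMap.coe_fst',
    coe_innerSL_apply, inner_zero_right, smul_eq_mul, mul_zero, ContinuousLinearMap.coe_snd', zero_add]
  ring

lemma fderiv_fderiv_grhoPow_rpow_fst {z : E × F} (hx : z.1 ≠ 0) (u : E) :
    fderiv ℝ (fun w => fderiv ℝ (fun w => grhoPow γ w ^ β) w (u, 0)) z (u, 0)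
      = 2 * β * (1 + γ) * (grhoPow γ z ^ (β - 1) * (‖z.1‖ ^ 2) ^ γ * ‖u‖ ^ 2
        + 2 * ⟪z.1, u⟫ ^ 2 * (γ * grhoPow γ z ^ (β - 1) * (‖z.1‖ ^ 2) ^ (γ - 1)
          + (β - 1) * (1 + γ) * grhoPow γ z ^ (β - 2) * (‖z.1‖ ^ 2) ^ γ * (‖z.1‖ ^ 2) ^ γ)) := by
  have hfirst : (fun w => fderiv ℝ (fun w => grhoPow γ w ^ β) w (u, 0)) =ᶠ[nhds z]
      fun w => 2 * β * (1 + γ) * (grhoPow γ w ^ (β - 1) * (‖w.1‖ ^ 2) ^ γ * ⟪w.1, u⟫) := by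
    filter_upwards [continuous_fst.continuousAt.eventually_ne hx] with w hw
    exact fderiv_grhoPow_rpow_apply_fst hw u
  have hS := (hasDerivAt_rpow_const (p := γ) (Or.inl (pow_ne_zero 2 (norm_ne_zero_iff.2 hx))))
    |>.comp_hasFDerivAt z (hasFDerivAt_fst (p := z)).norm_sq
  have hI := (hasFDerivAt_fst (p := z)).inner ℝ (hasFDerivAt_const u z)
  have h : HasFDerivAt
      (fun w => 2 * β * (1 + γ) * (grhoPow γ w ^ (β - 1) * (‖w.1‖ ^ 2) ^ γ * ⟪w.1, u⟫)) _ z :=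
    (((hasFDerivAt_grhoPow_rpow hx).mul hS).mul hI).const_mul _
  rw [hfirst.fderiv_eq, h.fderiv]
  simp only [Pi.mul_apply, Function.comp_apply, real_inner_comm, show β - 1 - 1 = β - 2 by ring,
    smul_add, add_apply, smul_apply, ContinuousLinearMap.comp_apply, ContinuousLinearMap.prod_apply,
    ContinuousLinearMap.coe_fst', zero_apply, fderivInnerCLM_apply, inner_zero_right,
    inner_self_eq_norm_sq_to_K, ringHom_apply, zero_add, smul_eq_mul, coe_innerSL_apply, nsmul_eq_mul,
    Nat.cast_ofNat, ContinuousLinearMap.coe_snd', mul_zero, add_zero]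
  ring

lemma fderiv_fderiv_grhoPow_rpow_snd {z : E × F} (hx : z.1 ≠ 0) (v : F) :
    fderiv ℝ (fun w => fderiv ℝ (fun w => grhoPow γ w ^ β) w (0, v)) z (0, v)
      = 2 * β * (1 + γ) ^ 2 * (grhoPow γ z ^ (β - 1) * ‖v‖ ^ 2
        + 2 * (β - 1) * (1 + γ) ^ 2 * grhoPow γ z ^ (β - 2) * ⟪z.2, v⟫ ^ 2) := by
  have hfirst : (fun w => fderiv ℝ (fun w => grhoPow γ w ^ β) w (0, v)) =ᶠ[nhds z]
      fun w => 2 * β * (1 + γ) ^ 2 * (grhoPow γ w ^ (β - 1) * ⟪w.2, v⟫) := by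
    filter_upwards [continuous_fst.continuousAt.eventually_ne hx] with w hw
    exact fderiv_grhoPow_rpow_apply_snd hw v
  have hI := (hasFDerivAt_snd (p := z)).inner ℝ (hasFDerivAt_const v z)
  have h : HasFDerivAt (fun w => 2 * β * (1 + γ) ^ 2 * (grhoPow γ w ^ (β - 1) * ⟪w.2, v⟫)) _ z :=
    ((hasFDerivAt_grhoPow_rpow hx).mul hI).const_mul _
  rw [hfirst.fderiv_eq, h.fderiv]
  simp only [real_inner_comm, show β - 1 - 1 = β - 2 by ring, smul_add, add_apply, smul_apply,
    ContinuousLinearMap.comp_apply, ContinuousLinearMap.prod_apply, ContinuousLinearMap.coe_snd',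
    zero_apply, fderivInnerCLM_apply, inner_zero_right, inner_self_eq_norm_sq_to_K, ringHom_apply,
    zero_add, smul_eq_mul, ContinuousLinearMap.coe_fst', coe_innerSL_apply, mul_zero]
  ring

end Gauge

lemma grho_eq_grhoPow_rpow (γ : ℝ) {m k : ℕ} (z : GSp m k) :
    grho γ z = grhoPow γ z ^ (1 / (2 * (1 + γ))) := by
  rw [grho, grhoPow, norm_rpow_two_mul]

lemma glap_grhoPow_rpow (γ β : ℝ) {m k : ℕ} {z : GSp m k} (hx : z.1 ≠ 0) :
    glap γ (fun w => grhoPow γ w ^ β) z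
      = 2 * β * (1 + γ) * (m + (1 + γ) * k + 2 * β * (1 + γ) - 2)
        * grhoPow γ z ^ (β - 1) * (‖z.1‖ ^ 2) ^ γ := by
  have hS : ‖z.1‖ ^ 2 ≠ 0 := pow_ne_zero 2 (norm_ne_zero_iff.2 hx)
  have hN := grhoPow_pos (γ := γ) hx
  have hx_sum : ∑ i, ⟪z.1, EuclideanSpace.single i 1⟫ ^ 2 = ‖z.1‖ ^ 2 := by
    simpa using (EuclideanSpace.basisFun (Fin m) ℝ).sum_sq_inner_left z.1
  have hy_sum : ∑ j, ⟪z.2, EuclideanSpace.single j 1⟫ ^ 2 = ‖z.2‖ ^ 2 := by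
    simpa using (EuclideanSpace.basisFun (Fin k) ℝ).sum_sq_inner_left z.2
  simp only [glap, fderiv_fderiv_grhoPow_rpow_fst hx, fderiv_fderiv_grhoPow_rpow_snd hx]
  simp only [PiLp.norm_single, norm_one, one_pow, mul_one, mul_add, Finset.sum_add_distrib,
    Finset.sum_const, Finset.card_univ, Fintype.card_fin, nsmul_eq_mul, ← Finset.mul_sum,
    ← Finset.sum_mul, hx_sum, hy_sum, norm_rpow_two_mul]
  set S := ‖z.1‖ ^ 2
  set N := grhoPow γ z
  have hSγ : S * S ^ (γ - 1) = S ^ γ := by rw [Real.rpow_sub_one hS]; field_simp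
  have hNβ : N ^ (β - 2) * N = N ^ (β - 1) := by
    rw [← Real.rpow_add_one hN.ne']; ring_nf
  have hNdef : N = S * S ^ γ + (1 + γ) ^ 2 * ‖z.2‖ ^ 2 := by
    rw [mul_comm S, ← Real.rpow_add_one hS, add_comm γ]; rfl
  linear_combination (4 * β * (1 + γ) * γ * N ^ (β - 1)) * hSγ
    + (4 * β * (β - 1) * (1 + γ) ^ 2 * S ^ γ) * hNβ
    - (4 * β * (β - 1) * (1 + γ) ^ 2 * S ^ γ * N ^ (β - 2)) * hNdef

theorem stmt2_general (γ : ℝ) (hγ : 0 < γ) (m k : ℕ)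
    (Q : ℝ) (hQ : Q = (m : ℝ) + (1 + γ) * k) (α : ℝ)
    (z : GSp m k) (hx : z.1 ≠ 0) :
    glap γ (fun w => grho γ w ^ (α - 2)) z
      = (Q + α - 4) * (α - 2) * grho γ z ^ (α - 4) * (‖z.1‖ ^ γ / grho γ z ^ γ) ^ 2 := by
  have hc : 1 + γ ≠ 0 := by positivity
  have hN := grhoPow_pos (γ := γ) hx
  obtain ⟨β, hβ⟩ : ∃ β, 2 * β * (1 + γ) = α - 2 := ⟨(α - 2) / (2 * (1 + γ)), by field_simp⟩
  have hφ : (fun w : GSp m k => grho γ w ^ (α - 2)) = fun w => grhoPow γ w ^ β := by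
    funext w
    rw [grho_eq_grhoPow_rpow, ← Real.rpow_mul (grhoPow_nonneg w), ← hβ]
    congr 1
    field_simp
  have hρα : grho γ z ^ (α - 4) = grhoPow γ z ^ (β - 1) * grhoPow γ z ^ (γ / (1 + γ)) := by
    rw [grho_eq_grhoPow_rpow, ← Real.rpow_mul hN.le, ← Real.rpow_add hN]
    congr 1
    field_simp
    linear_combination -hβ
  have hργ : (grho γ z ^ γ) ^ 2 = grhoPow γ z ^ (γ / (1 + γ)) := by
    rw [grho_eq_grhoPow_rpow, ← Real.rpow_mul hN.le, ← Real.rpow_mul_natCast hN.le]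
    congr 1
    field_simp
    ring
  rw [hφ, glap_grhoPow_rpow γ β hx, hβ, mul_assoc _ (grho γ z ^ _), div_pow, hρα, hργ,
    Real.rpow_pow_comm (norm_nonneg _), hQ]
  field_simp
  ring

/-- `Δ_γ(ρ^{α-2}) = (Q+α-4)(α-2) ρ^{α-4} |∇_γρ|²`. -/
theorem stmt2 (γ : ℝ) (hγ : 0 < γ) (m k : ℕ) (hm : 1 ≤ m) (hk : 1 ≤ k)
    (Q : ℝ) (hQ : Q = (m : ℝ) + (1 + γ) * k) (α : ℝ)
    (z : GSp m k) (hz : grho γ z ≠ 0) (hx : z.1 ≠ 0) :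
    glap γ (fun w => grho γ w ^ (α - 2)) z
      = (Q + α - 4) * (α - 2) * grho γ z ^ (α - 4) * (‖z.1‖ ^ γ / grho γ z ^ γ) ^ 2 :=
  stmt2_general γ hγ m k Q hQ α z hx
end

section
/- For any a,b∈ℝ^n and p≥2, there exists a constant c(p)>0 depending only on p such that |a+b|^p − |a|^p ≥ c(p)|b|^p + p|a|^{p-2}⟨a,b⟩. -/
open MeasureTheory Real

/-!
Write `‖a + b‖ ^ p = (‖a‖ ^ 2 + 2 ⟪a, b⟫ + ‖b‖ ^ 2) ^ (p / 2)`. The tangent line of the convex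
function `x ↦ x ^ (p / 2)` at `‖a‖ ^ 2` gives the inequality with `c * ‖b‖ ^ p` replaced by
`p / 2 * ‖a‖ ^ (p - 2) * ‖b‖ ^ 2`, which dominates a multiple of `‖b‖ ^ p` as long as
`‖a‖ ≥ ‖b‖ / 8`. When `‖a‖ ≤ ‖b‖ / 8`, the bound `‖a + b‖ ^ p ≥ (7 / 8) ^ p ‖b‖ ^ p` alone beats
`‖a‖ ^ p` and the inner-product term, because `7 ^ p > 1 + 8 p` for `p ≥ 2`.
-/

open RealInnerProductSpace

lemma rpow_tangent_line_le {x y q : ℝ} (hx : 0 ≤ x) (hy : 0 < y) (hq : 1 ≤ q) :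
    y ^ q + q * y ^ (q - 1) * (x - y) ≤ x ^ q := by
  have hs : -1 ≤ (x - y) / y := by rw [le_div_iff₀ hy]; linarith
  have bernoulli := mul_le_mul_of_nonneg_right (one_add_mul_self_le_rpow_one_add hs hq)
    (rpow_pos_of_pos hy q).le
  have hxy : 1 + (x - y) / y = x / y := by field_simp; ring
  rw [hxy, div_rpow hx hy.le, div_mul_cancel₀ _ (rpow_pos_of_pos hy q).ne'] at bernoulli
  calc y ^ q + q * y ^ (q - 1) * (x - y)
      = (1 + q * ((x - y) / y)) * y ^ q := by rw [rpow_sub_one hy.ne']; field_simp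
    _ ≤ x ^ q := bernoulli

lemma sq_rpow_half {t : ℝ} (ht : 0 ≤ t) (r : ℝ) : (t ^ 2) ^ (r / 2) = t ^ r := by
  rw [← rpow_natCast, ← rpow_mul ht]; congr 1; ring

lemma rpow_mul_sq_le_rpow_sub_two_mul_sq {p δ s t : ℝ} (hp : 2 ≤ p) (hδ : 0 ≤ δ) (hs : 0 ≤ s)
    (hst : δ * s ≤ t) : δ ^ (p - 2) * s ^ p ≤ t ^ (p - 2) * s ^ 2 := by
  have hs_pow : s ^ (p - 2) * s ^ 2 = s ^ p := by
    rw [← rpow_natCast, ← rpow_add' hs (by push_cast; linarith)]; norm_num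
  calc δ ^ (p - 2) * s ^ p = (δ * s) ^ (p - 2) * s ^ 2 := by
        rw [mul_rpow hδ hs, mul_assoc, hs_pow]
    _ ≤ t ^ (p - 2) * s ^ 2 := by gcongr

lemma one_add_eight_mul_lt_seven_rpow {p : ℝ} (hp : 2 ≤ p) : 1 + 8 * p < (7 : ℝ) ^ p := by
  have bernoulli := one_add_mul_self_le_rpow_one_add (by norm_num : (-1 : ℝ) ≤ 48)
    (by linarith : 1 ≤ p / 2)
  rw [show (1 + 48 : ℝ) = 7 ^ 2 by norm_num, sq_rpow_half (by norm_num)] at bernoulli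
  linarith

lemma seven_eighths_rpow_sub_pos {p : ℝ} (hp : 2 ≤ p) :
    0 < (1 - 1 / 8 : ℝ) ^ p - (1 / 8) ^ p - p * (1 / 8) ^ (p - 1) := by
  have h7 : (1 - 1 / 8 : ℝ) ^ p = 7 ^ p * (1 / 8) ^ p := by
    rw [← mul_rpow (by norm_num) (by norm_num)]; norm_num
  have h8 : (1 / 8 : ℝ) ^ (p - 1) = 8 * (1 / 8) ^ p := by
    rw [rpow_sub_one (by norm_num)]; field_simp
  rw [h7, h8]
  nlinarith [one_add_eight_mul_lt_seven_rpow hp, rpow_pos_of_pos (by norm_num : (0 : ℝ) < 1 / 8) p]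

section InnerProductSpace

variable {E : Type*} [NormedAddCommGroup E] [InnerProductSpace ℝ E]

lemma rpow_norm_add_tangent_le {p : ℝ} (hp : 2 ≤ p) {a : E} (ha : a ≠ 0) (b : E) :
    ‖a‖ ^ p + p * ‖a‖ ^ (p - 2) * ⟪a, b⟫ + p / 2 * ‖a‖ ^ (p - 2) * ‖b‖ ^ 2 ≤ ‖a + b‖ ^ p := by
  have h := rpow_tangent_line_le (sq_nonneg ‖a + b‖) (pow_pos (norm_pos_iff.2 ha) 2)
    (by linarith : 1 ≤ p / 2)
  rw [sq_rpow_half (norm_nonneg _), sq_rpow_half (norm_nonneg _),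
    show p / 2 - 1 = (p - 2) / 2 by ring, sq_rpow_half (norm_nonneg _), norm_add_sq_real] at h
  linarith

lemma rpow_norm_add_sub_ge_of_norm_le {p δ : ℝ} (hp : 1 < p) (hδ0 : 0 ≤ δ) (hδ1 : δ ≤ 1)
    {a b : E} (hab : ‖a‖ ≤ δ * ‖b‖) :
    ((1 - δ) ^ p - δ ^ p - p * δ ^ (p - 1)) * ‖b‖ ^ p
      ≤ ‖a + b‖ ^ p - ‖a‖ ^ p - p * ‖a‖ ^ (p - 2) * ⟪a, b⟫ := by
  have h_sum : ((1 - δ) * ‖b‖) ^ p ≤ ‖a + b‖ ^ p := by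
    refine rpow_le_rpow (mul_nonneg (by linarith) (norm_nonneg _)) ?_ (by linarith)
    linarith [add_comm a b ▸ norm_sub_le_norm_add b a]
  have h_a : ‖a‖ ^ p ≤ (δ * ‖b‖) ^ p := by gcongr
  have h_inner : p * ‖a‖ ^ (p - 2) * ⟪a, b⟫ ≤ p * (δ * ‖b‖) ^ (p - 1) * ‖b‖ := by
    calc p * ‖a‖ ^ (p - 2) * ⟪a, b⟫ ≤ p * ‖a‖ ^ (p - 2) * (‖a‖ * ‖b‖) := by
          gcongr; exact real_inner_le_norm a b
      _ = p * ‖a‖ ^ (p - 1) * ‖b‖ := by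
          rw [show p - 1 = p - 2 + 1 by ring, rpow_add' (norm_nonneg _) (by linarith), rpow_one]
          ring
      _ ≤ p * (δ * ‖b‖) ^ (p - 1) * ‖b‖ := by gcongr
  have h_b : ‖b‖ ^ (p - 1) * ‖b‖ = ‖b‖ ^ p := by
    rw [← rpow_add_one' (norm_nonneg _) (by linarith), sub_add_cancel]
  rw [mul_rpow (by linarith) (norm_nonneg _)] at h_sum
  rw [mul_rpow hδ0 (norm_nonneg _)] at h_a h_inner
  linear_combination h_sum + h_a + h_inner + p * δ ^ (p - 1) * h_b

end InnerProductSpace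

/-- elementary convexity inequality for `p ≥ 2`. -/
theorem stmt14 (p : ℝ) (hp : 2 ≤ p) :
    ∃ c : ℝ, 0 < c ∧ ∀ (n : ℕ) (a b : EuclideanSpace ℝ (Fin n)),
      ‖a + b‖ ^ p - ‖a‖ ^ p ≥ c * ‖b‖ ^ p + p * ‖a‖ ^ (p - 2) * (inner ℝ a b : ℝ) := by
  set δ : ℝ := 1 / 8
  set c_near := p / 2 * δ ^ (p - 2)
  set c_far := (1 - δ) ^ p - δ ^ p - p * δ ^ (p - 1)
  refine ⟨min c_near c_far, lt_min (by positivity) (seven_eighths_rpow_sub_pos hp),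
    fun n a b => ?_⟩
  have hb := rpow_nonneg (norm_nonneg b) p
  rcases le_or_gt ‖a‖ (δ * ‖b‖) with hab | hab
  · have h_far := rpow_norm_add_sub_ge_of_norm_le (by linarith : 1 < p) (by norm_num) (by norm_num) hab
    linarith [mul_le_mul_of_nonneg_right (min_le_right c_near c_far) hb]
  · have ha : a ≠ 0 := norm_pos_iff.1 ((by positivity : 0 ≤ δ * ‖b‖).trans_lt hab)
    have h_tangent := rpow_norm_add_tangent_le hp ha b
    have h_near : c_near * ‖b‖ ^ p ≤ p / 2 * (‖a‖ ^ (p - 2) * ‖b‖ ^ 2) := by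
      rw [mul_assoc]
      exact mul_le_mul_of_nonneg_left
        (rpow_mul_sq_le_rpow_sub_two_mul_sq hp (by positivity) (norm_nonneg b) hab.le)
        (by positivity)
    linarith [mul_le_mul_of_nonneg_right (min_le_left c_near c_far) hb]
end

section
/- For any w₁,w₂∈ℝ^n and 1<q<2, there exists a constant c(q)>0 depending only on q such that c(q)|w₂|^q ≥ |w₁+w₂|^q − |w₁|^q − q|w₁|^{q-2}⟨w₁,w₂⟩. -/
open MeasureTheory Real

/-!
Write `a = ‖w₁‖`, `b = ‖w₂‖`. If `b < a`, concavity of `t ↦ t ^ (q / 2)` bounds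
`‖w₁ + w₂‖ ^ q = (a² + 2⟪w₁, w₂⟫ + b²) ^ (q / 2)` by its tangent line at `a²`, which is
`a ^ q + q a ^ (q - 2) ⟪w₁, w₂⟫ + (q / 2) a ^ (q - 2) b²`, and `a ^ (q - 2) b² ≤ b ^ q` because
`q ≤ 2`. If `a ≤ b`, every term is crudely of size `b ^ q`, using `q ≥ 1` for the inner product term.
-/

open scoped RealInnerProductSpace

namespace Real

theorem rpow_le_rpow_add_mul_sub {p a x : ℝ} (hp₀ : 0 ≤ p) (hp₁ : p ≤ 1) (ha : 0 < a)
    (hx : 0 ≤ x) : x ^ p ≤ a ^ p + p * a ^ (p - 1) * (x - a) := by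
  have hbern : (x / a) ^ p ≤ 1 + p * (x / a - 1) := by
    simpa using rpow_one_add_le_one_add_mul_self (s := x / a - 1)
      (by linarith [div_nonneg hx ha.le]) hp₀ hp₁
  calc x ^ p = a ^ p * (x / a) ^ p := by
        rw [← mul_rpow ha.le (div_nonneg hx ha.le), mul_div_cancel₀ _ ha.ne']
    _ ≤ a ^ p * (1 + p * (x / a - 1)) := by gcongr
    _ = a ^ p + p * a ^ (p - 1) * (x - a) := by
        rw [rpow_sub_one ha.ne']
        field_simp

theorem sq_rpow_div_two {t : ℝ} (ht : 0 ≤ t) (r : ℝ) : (t ^ 2) ^ (r / 2) = t ^ r := by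
  rw [rpow_div_two_eq_sqrt r (sq_nonneg t), sqrt_sq ht]

theorem rpow_sub_two_mul_sq_le {a b q : ℝ} (hb : 0 ≤ b) (hba : b ≤ a) (hq : q ≤ 2) :
    a ^ (q - 2) * b ^ 2 ≤ b ^ q := by
  rcases hb.eq_or_lt with rfl | hb
  · simp [rpow_nonneg]
  calc a ^ (q - 2) * b ^ 2 ≤ b ^ (q - 2) * b ^ 2 :=
        mul_le_mul_of_nonneg_right (rpow_le_rpow_of_nonpos hb hba (by linarith)) (sq_nonneg b)
    _ = b ^ q := by rw [← rpow_two, ← rpow_add hb, sub_add_cancel]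

end Real

section InnerProductSpace

variable {E : Type*} [NormedAddCommGroup E] [InnerProductSpace ℝ E]

theorem rpow_sub_two_mul_abs_inner_le (q : ℝ) (w₁ w₂ : E) :
    ‖w₁‖ ^ (q - 2) * |⟪w₁, w₂⟫| ≤ ‖w₁‖ ^ (q - 1) * ‖w₂‖ := by
  rcases eq_or_ne w₁ 0 with rfl | hw₁
  · simp only [inner_zero_left, abs_zero, mul_zero, norm_zero]
    positivity
  have ha : ‖w₁‖ ≠ 0 := norm_ne_zero_iff.mpr hw₁
  calc ‖w₁‖ ^ (q - 2) * |⟪w₁, w₂⟫| ≤ ‖w₁‖ ^ (q - 2) * (‖w₁‖ * ‖w₂‖) := by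
        gcongr
        exact abs_real_inner_le_norm w₁ w₂
    _ = ‖w₁‖ ^ (q - 1) * ‖w₂‖ := by
        rw [← mul_assoc, ← rpow_add_one ha]
        ring_nf

theorem norm_add_rpow_sub_le_of_norm_lt {q : ℝ} (hq₀ : 0 ≤ q) (hq₂ : q ≤ 2) {w₁ w₂ : E}
    (h : ‖w₂‖ < ‖w₁‖) :
    ‖w₁ + w₂‖ ^ q - ‖w₁‖ ^ q - q * ‖w₁‖ ^ (q - 2) * ⟪w₁, w₂⟫ ≤ q / 2 * ‖w₂‖ ^ q := by
  have ha : 0 < ‖w₁‖ := (norm_nonneg w₂).trans_lt h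
  have htangent := rpow_le_rpow_add_mul_sub (p := q / 2) (x := ‖w₁ + w₂‖ ^ 2)
    (by linarith) (by linarith) (pow_pos ha 2) (sq_nonneg _)
  rw [show q / 2 - 1 = (q - 2) / 2 by ring, sq_rpow_div_two (norm_nonneg _),
    sq_rpow_div_two ha.le, sq_rpow_div_two (norm_nonneg _), norm_add_sq_real] at htangent
  have hb := rpow_sub_two_mul_sq_le (norm_nonneg w₂) h.le hq₂
  nlinarith

theorem norm_add_rpow_sub_le_of_norm_le {q : ℝ} (hq : 1 ≤ q) {w₁ w₂ : E}
    (h : ‖w₁‖ ≤ ‖w₂‖) :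
    ‖w₁ + w₂‖ ^ q - ‖w₁‖ ^ q - q * ‖w₁‖ ^ (q - 2) * ⟪w₁, w₂⟫ ≤ (2 ^ q + q) * ‖w₂‖ ^ q := by
  have hsum : ‖w₁ + w₂‖ ^ q ≤ 2 ^ q * ‖w₂‖ ^ q := by
    rw [← mul_rpow zero_le_two (norm_nonneg _)]
    gcongr
    linarith [norm_add_le w₁ w₂]
  have hinner : ‖w₁‖ ^ (q - 2) * |⟪w₁, w₂⟫| ≤ ‖w₂‖ ^ q :=
    calc ‖w₁‖ ^ (q - 2) * |⟪w₁, w₂⟫| ≤ ‖w₁‖ ^ (q - 1) * ‖w₂‖ :=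
          rpow_sub_two_mul_abs_inner_le q w₁ w₂
      _ ≤ ‖w₂‖ ^ (q - 1) * ‖w₂‖ := by gcongr
      _ = ‖w₂‖ ^ q := by rw [← rpow_add_one' (norm_nonneg _) (by linarith), sub_add_cancel]
  have hneg : -(‖w₁‖ ^ (q - 2) * ⟪w₁, w₂⟫) ≤ ‖w₂‖ ^ q := by
    refine le_trans ?_ hinner
    rw [← mul_neg]
    exact mul_le_mul_of_nonneg_left (neg_le_abs _) (rpow_nonneg (norm_nonneg w₁) _)
  nlinarith [rpow_nonneg (norm_nonneg w₁) q]

theorem norm_add_rpow_sub_le {q : ℝ} (hq₁ : 1 ≤ q) (hq₂ : q ≤ 2) (w₁ w₂ : E) :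
    ‖w₁ + w₂‖ ^ q - ‖w₁‖ ^ q - q * ‖w₁‖ ^ (q - 2) * ⟪w₁, w₂⟫ ≤ (2 ^ q + q) * ‖w₂‖ ^ q := by
  rcases lt_or_ge ‖w₂‖ ‖w₁‖ with h | h
  · refine (norm_add_rpow_sub_le_of_norm_lt (by linarith) hq₂ h).trans ?_
    gcongr
    linarith [one_le_rpow one_le_two (by linarith : 0 ≤ q)]
  · exact norm_add_rpow_sub_le_of_norm_le hq₁ h

end InnerProductSpace

/-- elementary inequality for `1 < q < 2`. -/
theorem stmt15 (q : ℝ) (hq1 : 1 < q) (hq2 : q < 2) :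
    ∃ c : ℝ, 0 < c ∧ ∀ (n : ℕ) (w₁ w₂ : EuclideanSpace ℝ (Fin n)),
      c * ‖w₂‖ ^ q ≥ ‖w₁ + w₂‖ ^ q - ‖w₁‖ ^ q - q * ‖w₁‖ ^ (q - 2) * (inner ℝ w₁ w₂ : ℝ) :=
  ⟨2 ^ q + q, by positivity, fun _ w₁ w₂ => norm_add_rpow_sub_le hq1.le hq2.le w₁ w₂⟩
end

section
/- Let γ>0, m,k≥1, Q=m+(1+γ)k with Q+α-4>0 and 2<α<Q, and let ρ(x,y)=(|x|^{2(1+γ)}+(1+γ)²|y|²)^{1/(2(1+γ))}. For ε>0 define the radial function φ_ε(z)=g(ρ(z)) where g(s)=((Q+α-4)/2+ε)(s−1)+1 for 0≤s≤1 and g(s)=s^{−((Q+α-4)/2+ε)} for s>1. Then ∫_{ρ>1} ρ^α|Δ_γφ_ε|²/|∇_γρ|² dz = ((Q+α-4)/2+ε)²((Q-α)/2−ε)²·∫_{ρ>1} ρ^{−Q−2ε}|∇_γρ|² dz. -/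
open MeasureTheory Real

/-!
On `{ρ > 1}` the test function is `ρ ^ (-β)` with `β = (Q + α - 4) / 2 + ε`, and the radial formula
`Δ_γ (ρ ^ p) = p (p + Q - 2) |∇_γ ρ|² ρ ^ (p - 2)` gives
`Δ_γ φ_ε = -β ((Q - α) / 2 - ε) |∇_γ ρ|² ρ ^ (-β - 2)`. Since `α - 2β - 4 = -Q - 2ε`, the two
integrands then agree pointwise, so the integrals agree whether or not they converge.

The radial formula is obtained by differentiating `u ^ c`, where
`u = ρ ^ (2 (1 + γ)) = (|x|²) ^ (1 + γ) + (1 + γ)² |y|²` is smooth away from `x = 0`; summing the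
pure second derivatives, the terms in `x_i²` and `y_j²` recombine into `u` itself.
-/

open Filter Topology

namespace Grushin

variable {m k : ℕ} {γ : ℝ}

noncomputable def normSqFst (z : GSp m k) : ℝ := ‖z.1‖ ^ 2

noncomputable def normSqSnd (z : GSp m k) : ℝ := ‖z.2‖ ^ 2

noncomputable def grhoPow (γ : ℝ) (z : GSp m k) : ℝ :=
  normSqFst z ^ (1 + γ) + (1 + γ) ^ 2 * normSqSnd z

noncomputable def dirFst (i : Fin m) : GSp m k := (EuclideanSpace.single i 1, 0)

noncomputable def dirSnd (j : Fin k) : GSp m k := (0, EuclideanSpace.single j 1)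

lemma glap_congr_of_eventuallyEq {φ₁ φ₂ : GSp m k → ℝ} {z : GSp m k} (h : φ₁ =ᶠ[𝓝 z] φ₂) :
    glap γ φ₁ z = glap γ φ₂ z := by
  have hD : ∀ v : GSp m k, (fun w => fderiv ℝ φ₁ w v) =ᶠ[𝓝 z] fun w => fderiv ℝ φ₂ w v :=
    fun v => (h.fderiv (𝕜 := ℝ)).mono fun w hw => by simp only [hw]
  simp only [glap, (hD _).fderiv_eq]

lemma glap_eq (φ : GSp m k → ℝ) (z : GSp m k) :
    glap γ φ z = (∑ i, fderiv ℝ (fun w => fderiv ℝ φ w (dirFst i)) z (dirFst i))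
      + normSqFst z ^ γ * ∑ j, fderiv ℝ (fun w => fderiv ℝ φ w (dirSnd j)) z (dirSnd j) := by
  rw [glap, normSqFst, ← rpow_two, ← rpow_mul (norm_nonneg _)]
  rfl

lemma sum_sq_fst (z : GSp m k) : ∑ i, z.1 i ^ 2 = normSqFst z := by
  simp [normSqFst, EuclideanSpace.norm_sq_eq]

lemma sum_sq_snd (z : GSp m k) : ∑ j, z.2 j ^ 2 = normSqSnd z := by
  simp [normSqSnd, EuclideanSpace.norm_sq_eq]

lemma normSqFst_pos {z : GSp m k} (hz : z.1 ≠ 0) : 0 < normSqFst z := by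
  unfold normSqFst; positivity

lemma grhoPow_nonneg (γ : ℝ) (z : GSp m k) : 0 ≤ grhoPow γ z := by
  unfold grhoPow normSqFst normSqSnd; positivity

lemma grhoPow_pos {z : GSp m k} (hz : z.1 ≠ 0) : 0 < grhoPow γ z := by
  have := normSqFst_pos hz
  unfold grhoPow normSqSnd; positivity

lemma hasFDerivAt_normSqFst (z : GSp m k) :
    HasFDerivAt normSqFst (2 • (innerSL ℝ z.1).comp (ContinuousLinearMap.fst ℝ _ _)) z :=
  hasFDerivAt_fst.norm_sq

lemma hasFDerivAt_normSqSnd (z : GSp m k) :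
    HasFDerivAt normSqSnd (2 • (innerSL ℝ z.2).comp (ContinuousLinearMap.snd ℝ _ _)) z :=
  hasFDerivAt_snd.norm_sq

lemma hasFDerivAt_grhoPow {z : GSp m k} (hz : z.1 ≠ 0) :
    HasFDerivAt (grhoPow γ)
      (((1 + γ) * normSqFst z ^ γ) • 2 • (innerSL ℝ z.1).comp (ContinuousLinearMap.fst ℝ _ _)
        + (1 + γ) ^ 2 • 2 • (innerSL ℝ z.2).comp (ContinuousLinearMap.snd ℝ _ _)) z := by
  have hA := (hasFDerivAt_normSqFst z).rpow_const (p := 1 + γ) (Or.inl (normSqFst_pos hz).ne')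
  have h := hA.add ((hasFDerivAt_normSqSnd z).const_mul ((1 + γ) ^ 2))
  rw [add_sub_cancel_left] at h
  exact h

lemma hasFDerivAt_grhoPow_rpow {z : GSp m k} (hz : z.1 ≠ 0) (c : ℝ) :
    HasFDerivAt (fun w => grhoPow γ w ^ c) ((c * grhoPow γ z ^ (c - 1)) •
      (((1 + γ) * normSqFst z ^ γ) • 2 • (innerSL ℝ z.1).comp (ContinuousLinearMap.fst ℝ _ _)
        + (1 + γ) ^ 2 • 2 • (innerSL ℝ z.2).comp (ContinuousLinearMap.snd ℝ _ _))) z :=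
  (hasFDerivAt_grhoPow hz).rpow_const (Or.inl (grhoPow_pos hz).ne')

lemma fderiv_grhoPow_rpow_dirFst {z : GSp m k} (hz : z.1 ≠ 0) (c : ℝ) (i : Fin m) :
    fderiv ℝ (fun w => grhoPow γ w ^ c) z (dirFst i)
      = 2 * (1 + γ) * c * (grhoPow γ z ^ (c - 1) * normSqFst z ^ γ * z.1 i) := by
  rw [(hasFDerivAt_grhoPow_rpow hz c).fderiv]
  simp only [smul_add, dirFst, add_apply, smul_apply, ContinuousLinearMap.comp_apply,
    ContinuousLinearMap.coe_fst', coe_innerSL_apply, EuclideanSpace.inner_single_right,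
    ringHom_apply, one_mul, nsmul_eq_mul, Nat.cast_ofNat, smul_eq_mul, ContinuousLinearMap.coe_snd',
    inner_zero_right, mul_zero, add_zero]
  ring

lemma fderiv_grhoPow_rpow_dirSnd {z : GSp m k} (hz : z.1 ≠ 0) (c : ℝ) (j : Fin k) :
    fderiv ℝ (fun w => grhoPow γ w ^ c) z (dirSnd j)
      = 2 * (1 + γ) ^ 2 * c * (grhoPow γ z ^ (c - 1) * z.2 j) := by
  rw [(hasFDerivAt_grhoPow_rpow hz c).fderiv]
  simp only [smul_add, dirSnd, add_apply, smul_apply, ContinuousLinearMap.comp_apply,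
    ContinuousLinearMap.coe_fst', coe_innerSL_apply, inner_zero_right, smul_eq_mul,
    mul_zero, ContinuousLinearMap.coe_snd', EuclideanSpace.inner_single_right, ringHom_apply,
    one_mul, nsmul_eq_mul, Nat.cast_ofNat, zero_add]
  ring

lemma eventually_fst_ne_zero {z : GSp m k} (hz : z.1 ≠ 0) : ∀ᶠ w in 𝓝 z, w.1 ≠ 0 :=
  continuous_fst.continuousAt.eventually_ne hz

lemma fderiv_fderiv_grhoPow_rpow_dirFst {z : GSp m k} (hz : z.1 ≠ 0) (c : ℝ) (i : Fin m) :
    fderiv ℝ (fun w => fderiv ℝ (fun w => grhoPow γ w ^ c) w (dirFst i)) z (dirFst i)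
      = 2 * (1 + γ) * c * ((2 * (1 + γ) * (c - 1) * grhoPow γ z ^ (c - 1 - 1)
          * normSqFst z ^ γ * normSqFst z ^ γ
        + 2 * γ * grhoPow γ z ^ (c - 1) * normSqFst z ^ (γ - 1))
          * z.1 i ^ 2 + grhoPow γ z ^ (c - 1) * normSqFst z ^ γ) := by
  have hfirst : (fun w => fderiv ℝ (fun w => grhoPow γ w ^ c) w (dirFst i)) =ᶠ[𝓝 z]
      fun w => 2 * (1 + γ) * c * (grhoPow γ w ^ (c - 1) * normSqFst w ^ γ * w.1 i) :=
    (eventually_fst_ne_zero hz).mono fun w hw => fderiv_grhoPow_rpow_dirFst hw c i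
  have hu := hasFDerivAt_grhoPow_rpow (γ := γ) hz (c - 1)
  have hA := (hasFDerivAt_normSqFst z).rpow_const (p := γ) (Or.inl (normSqFst_pos hz).ne')
  have hx := ((EuclideanSpace.proj i).comp (ContinuousLinearMap.fst ℝ _ _)).hasFDerivAt (x := z)
  have hd : HasFDerivAt
      (fun w => 2 * (1 + γ) * c * (grhoPow γ w ^ (c - 1) * normSqFst w ^ γ * w.1 i)) _ z :=
    ((hu.mul hA).mul hx).const_mul _
  rw [hfirst.fderiv_eq, hd.fderiv]
  simp only [Pi.mul_apply, ContinuousLinearMap.comp_apply, ContinuousLinearMap.coe_fst',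
    PiLp.proj_apply, smul_add, dirFst, add_apply, smul_apply, PiLp.single_eq_same, smul_eq_mul,
    mul_one, coe_innerSL_apply, EuclideanSpace.inner_single_right, ringHom_apply, one_mul,
    nsmul_eq_mul, Nat.cast_ofNat, ContinuousLinearMap.coe_snd', inner_zero_right,
    mul_zero, add_zero]
  ring

lemma fderiv_fderiv_grhoPow_rpow_dirSnd {z : GSp m k} (hz : z.1 ≠ 0) (c : ℝ) (j : Fin k) :
    fderiv ℝ (fun w => fderiv ℝ (fun w => grhoPow γ w ^ c) w (dirSnd j)) z (dirSnd j)
      = 2 * (1 + γ) ^ 2 * c * ((2 * (1 + γ) ^ 2 * (c - 1) * grhoPow γ z ^ (c - 1 - 1)) * z.2 j ^ 2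
        + grhoPow γ z ^ (c - 1)) := by
  have hfirst : (fun w => fderiv ℝ (fun w => grhoPow γ w ^ c) w (dirSnd j)) =ᶠ[𝓝 z]
      fun w => 2 * (1 + γ) ^ 2 * c * (grhoPow γ w ^ (c - 1) * w.2 j) :=
    (eventually_fst_ne_zero hz).mono fun w hw => fderiv_grhoPow_rpow_dirSnd hw c j
  have hu := hasFDerivAt_grhoPow_rpow (γ := γ) hz (c - 1)
  have hy := ((EuclideanSpace.proj j).comp (ContinuousLinearMap.snd ℝ _ _)).hasFDerivAt (x := z)
  have hd : HasFDerivAt (fun w => 2 * (1 + γ) ^ 2 * c * (grhoPow γ w ^ (c - 1) * w.2 j)) _ z :=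
    (hu.mul hy).const_mul _
  rw [hfirst.fderiv_eq, hd.fderiv]
  simp only [ContinuousLinearMap.comp_apply, ContinuousLinearMap.coe_snd', PiLp.proj_apply,
    smul_add, dirSnd, add_apply, smul_apply, PiLp.single_eq_same, smul_eq_mul, mul_one,
    ContinuousLinearMap.coe_fst', coe_innerSL_apply, inner_zero_right, mul_zero,
    EuclideanSpace.inner_single_right, ringHom_apply, one_mul, nsmul_eq_mul, Nat.cast_ofNat,
    zero_add]
  ring

theorem glap_grhoPow_rpow {z : GSp m k} (hz : z.1 ≠ 0) (c : ℝ) :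
    glap γ (fun w => grhoPow γ w ^ c) z
      = 2 * (1 + γ) * c * (2 * (1 + γ) * c + m + (1 + γ) * k - 2)
        * (normSqFst z ^ γ * grhoPow γ z ^ (c - 1)) := by
  have hA := normSqFst_pos hz
  have hu := grhoPow_pos (γ := γ) hz
  have hu_eq : grhoPow γ z = normSqFst z ^ γ * normSqFst z + (1 + γ) ^ 2 * normSqSnd z := by
    rw [grhoPow, add_comm 1 γ, rpow_add_one hA.ne']
  have hu_pow : grhoPow γ z ^ (c - 1 - 1) * grhoPow γ z = grhoPow γ z ^ (c - 1) := by
    rw [← rpow_add_one hu.ne', sub_add_cancel]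
  have hA_pow : normSqFst z ^ (γ - 1) * normSqFst z = normSqFst z ^ γ := by
    rw [← rpow_add_one hA.ne', sub_add_cancel]
  simp only [glap_eq, fderiv_fderiv_grhoPow_rpow_dirFst hz, fderiv_fderiv_grhoPow_rpow_dirSnd hz,
    ← Finset.mul_sum, Finset.sum_add_distrib, sum_sq_fst, sum_sq_snd, Finset.sum_const,
    Finset.card_univ, Fintype.card_fin, nsmul_eq_mul]
  linear_combination
    (-(4 * (1 + γ) ^ 2 * c * (c - 1) * normSqFst z ^ γ * grhoPow γ z ^ (c - 1 - 1))) * hu_eq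
    + (4 * (1 + γ) ^ 2 * c * (c - 1) * normSqFst z ^ γ) * hu_pow
    + (4 * γ * (1 + γ) * c * grhoPow γ z ^ (c - 1)) * hA_pow

lemma grho_eq_grhoPow_rpow (γ : ℝ) (z : GSp m k) :
    grho γ z = grhoPow γ z ^ (1 / (2 * (1 + γ))) := by
  rw [grho, grhoPow, normSqFst, normSqSnd, rpow_mul (norm_nonneg _), rpow_two]

lemma grho_rpow (γ p : ℝ) (z : GSp m k) : grho γ z ^ p = grhoPow γ z ^ (p / (2 * (1 + γ))) := by
  rw [grho_eq_grhoPow_rpow, ← rpow_mul (grhoPow_nonneg γ z), one_div_mul_eq_div]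

lemma grhoPow_eq_grho_rpow (hγ : 1 + γ ≠ 0) (z : GSp m k) :
    grhoPow γ z = grho γ z ^ (2 * (1 + γ)) := by
  rw [grho_eq_grhoPow_rpow, ← rpow_mul (grhoPow_nonneg γ z), one_div_mul_cancel (by positivity),
    rpow_one]

lemma grho_pos {z : GSp m k} (hz : z.1 ≠ 0) : 0 < grho γ z := by
  rw [grho_eq_grhoPow_rpow]
  exact rpow_pos_of_pos (grhoPow_pos hz) _

theorem glap_grho_rpow (hγ : 1 + γ ≠ 0) {z : GSp m k} (hz : z.1 ≠ 0) (p : ℝ) :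
    glap γ (fun w => grho γ w ^ p) z
      = p * (p + m + (1 + γ) * k - 2) * (‖z.1‖ ^ γ / grho γ z ^ γ) ^ 2 * grho γ z ^ (p - 2) := by
  have hρ := grho_pos (γ := γ) hz
  have hc : 2 * (1 + γ) * (p / (2 * (1 + γ))) = p := by field_simp
  have hρ_pow : grho γ z ^ (p - 2)
      = grho γ z ^ (2 * (1 + γ) * (p / (2 * (1 + γ)) - 1)) * (grho γ z ^ γ) ^ 2 := by
    rw [← rpow_natCast, ← rpow_mul hρ.le, ← rpow_add hρ, mul_sub, hc]
    ring_nf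
  simp only [grho_rpow γ p]
  rw [glap_grhoPow_rpow hz, hc, grhoPow_eq_grho_rpow hγ, ← rpow_mul hρ.le, hρ_pow, normSqFst,
    ← rpow_pow_comm (norm_nonneg _)]
  field_simp

lemma continuous_grho (hγ : 0 ≤ 1 + γ) : Continuous (grho γ : GSp m k → ℝ) := by
  refine Continuous.rpow_const ?_ fun _ => Or.inr (by positivity)
  exact (continuous_fst.norm.rpow_const fun _ => Or.inr (by positivity)).add
    (continuous_const.mul (continuous_snd.norm.pow 2))

end Grushin

open Grushin

theorem stmt19_general (γ : ℝ) (hγ : 0 < γ) (m k : ℕ)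
    (Q : ℝ) (hQ : Q = (m : ℝ) + (1 + γ) * k) (α : ℝ) (ε : ℝ)
    (g : ℝ → ℝ)
    (hg : ∀ s : ℝ, g s = if s ≤ 1 then ((Q + α - 4) / 2 + ε) * (s - 1) + 1
      else s ^ (-((Q + α - 4) / 2 + ε))) :
    ∫ z in {z : GSp m k | 1 < grho γ z},
        grho γ z ^ α * (glap γ (fun w => g (grho γ w)) z) ^ 2 /
          (‖z.1‖ ^ γ / grho γ z ^ γ) ^ 2
      = ((Q + α - 4) / 2 + ε) ^ 2 * ((Q - α) / 2 - ε) ^ 2 *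
        ∫ z in {z : GSp m k | 1 < grho γ z},
          grho γ z ^ (-Q - 2 * ε) * (‖z.1‖ ^ γ / grho γ z ^ γ) ^ 2 := by
  have hS : IsOpen {z : GSp m k | 1 < grho γ z} :=
    isOpen_lt continuous_const (continuous_grho (by linarith))
  refine (setIntegral_congr_fun hS.measurableSet fun z hz => ?_).trans (integral_const_mul _ _)
  rcases eq_or_ne z.1 0 with hz1 | hz1
  -- at `x = 0` both integrands vanish, the left one through division by `0`
  · simp [hz1, zero_rpow hγ.ne']
  have hφ : (fun w => g (grho γ w)) =ᶠ[𝓝 z] fun w => grho γ w ^ (-((Q + α - 4) / 2 + ε)) :=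
    (hS.eventually_mem hz).mono fun w (hw : 1 < grho γ w) => by simp only [hg, if_neg hw.not_ge]
  have hK : -((Q + α - 4) / 2 + ε) + m + (1 + γ) * k - 2 = (Q - α) / 2 - ε := by rw [hQ]; ring
  have hρ := grho_pos (γ := γ) hz1
  have hρ_pow : grho γ z ^ α * (grho γ z ^ (-((Q + α - 4) / 2 + ε) - 2)) ^ 2
      = grho γ z ^ (-Q - 2 * ε) := by
    rw [← rpow_natCast, ← rpow_mul hρ.le, ← rpow_add hρ]
    ring_nf
  have hW : (‖z.1‖ ^ γ / grho γ z ^ γ) ^ 2 ≠ 0 := by positivity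
  rw [glap_congr_of_eventuallyEq hφ, glap_grho_rpow (by linarith) hz1, hK, ← hρ_pow]
  generalize grho γ z ^ (-((Q + α - 4) / 2 + ε) - 2) = P
  field_simp

/-- the key computation for sharpness of the Rellich constant. -/
theorem stmt19 (γ : ℝ) (hγ : 0 < γ) (m k : ℕ) (hm : 1 ≤ m) (hk : 1 ≤ k)
    (Q : ℝ) (hQ : Q = (m : ℝ) + (1 + γ) * k) (α : ℝ) (hα : 2 < α) (hαQ : α < Q)
    (hQα : 0 < Q + α - 4) (ε : ℝ) (hε : 0 < ε)
    (g : ℝ → ℝ)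
    (hg : ∀ s : ℝ, g s = if s ≤ 1 then ((Q + α - 4) / 2 + ε) * (s - 1) + 1
      else s ^ (-((Q + α - 4) / 2 + ε))) :
    ∫ z in {z : GSp m k | 1 < grho γ z},
        grho γ z ^ α * (glap γ (fun w => g (grho γ w)) z) ^ 2 /
          (‖z.1‖ ^ γ / grho γ z ^ γ) ^ 2
      = ((Q + α - 4) / 2 + ε) ^ 2 * ((Q - α) / 2 - ε) ^ 2 *
        ∫ z in {z : GSp m k | 1 < grho γ z},
          grho γ z ^ (-Q - 2 * ε) * (‖z.1‖ ^ γ / grho γ z ^ γ) ^ 2 :=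
  stmt19_general γ hγ m k Q hQ α ε g hg
end
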